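/- (Stability of the SGA iteration.) Let n ≥ 1, r > 0, T > 0, M > 0, and set η(r,M,T) := 1 / ( M⁴ (1 + (n+3) r⁴ e^{2T(2M²+1)}) ). Let 0 < η ≤ η(r,M,T), let W₀ ∈ ℝ^{n×n} with ‖W₀‖_F ≤ r, let x(1), x(2), … be vectors in ℝⁿ with ‖x(k)‖₂ ≤ M for all k, and define the iterates W(0) = W₀ and W(k) = W(k−1) + η G( x(k)x(k)ᵀ, W(k−1) ). Then for every integer k with 0 ≤ k ≤ T/η one has ‖W(k)‖_F² ≤ r² e^{T(2M²+1)}. -/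

import Mathlib

open Matrix

/-- `Σ(Λ,Q)`: entrywise, `(QᵀΛQ)_{jk}` for `j > k`, `−(QᵀΛQ)_{jk}` for `j < k`, `0` on the
diagonal. -/
noncomputable def sigmaMat {n : ℕ} (Λ Q : Matrix (Fin n) (Fin n) ℝ) :
    Matrix (Fin n) (Fin n) ℝ :=
  Matrix.of fun j k =>
    if (k : ℕ) < (j : ℕ) then (Qᵀ * Λ * Q) j k
    else if (j : ℕ) < (k : ℕ) then -((Qᵀ * Λ * Q) j k)
    else 0

/-- Frobenius norm of a matrix. -/
noncomputable def frobNorm {n : ℕ} (A : Matrix (Fin n) (Fin n) ℝ) : ℝ :=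
  Real.sqrt (∑ i, ∑ j, (A i j) ^ 2)

/-- Euclidean (`ℓ²`) norm on `ℝⁿ`. -/
noncomputable def euclNorm {n : ℕ} (x : Fin n → ℝ) : ℝ :=
  Real.sqrt (∑ i, (x i) ^ 2)

/-- The rank-one matrix `xxᵀ`. -/
def outer {n : ℕ} (x : Fin n → ℝ) : Matrix (Fin n) (Fin n) ℝ :=
  Matrix.of fun i j => x i * x j

/-- `G(Λ,Q) := ΛQ − QQᵀΛQ + QΣ(Λ,Q)`. -/
noncomputable def Gmat {n : ℕ} (Λ Q : Matrix (Fin n) (Fin n) ℝ) :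
    Matrix (Fin n) (Fin n) ℝ :=
  Λ * Q - Q * Qᵀ * Λ * Q + Q * sigmaMat Λ Q

/-!
Write `v = Wᵀx` and `Σ = Σ(xxᵀ, W)`. Then `G(xxᵀ, W) = (x - Wv)vᵀ + WΣ` with `Σ` skew-symmetric,
so the term `tr(WᵀWΣ)` drops out of `⟨W, G⟩_F = ‖v‖² - ‖Wv‖² ≤ ‖x‖² ‖W‖²_F`, and Cauchy–Schwarz
gives `‖G‖²_F ≤ ‖x‖⁴ ‖W‖²_F (1 + 4 ‖W‖⁴_F)`. So while `‖W‖²_F ≤ r² e^{T(2M²+1)}`, the step-size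
condition lets one step multiply `‖W‖²_F` by at most `1 + η(2M²+1)`; over `k ≤ T/η` steps this
compounds to at most `e^{T(2M²+1)}`, which keeps the a-priori bound in force.
-/

section Frobenius

variable {l m n : Type*} [Fintype l] [Fintype m] [Fintype n]

def frobInner (A B : Matrix m n ℝ) : ℝ := trace (Aᵀ * B)

lemma frobInner_eq_sum (A B : Matrix m n ℝ) : frobInner A B = ∑ i, ∑ j, A i j * B i j := by
  rw [frobInner, trace, Finset.sum_comm]
  simp [mul_apply]

lemma frobInner_comm (A B : Matrix m n ℝ) : frobInner A B = frobInner B A := by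
  simp only [frobInner_eq_sum, mul_comm]

lemma frobInner_transpose (A B : Matrix m n ℝ) : frobInner Aᵀ Bᵀ = frobInner A B := by
  rw [frobInner_eq_sum, frobInner_eq_sum, Finset.sum_comm]
  rfl

lemma frobInner_self_nonneg (A : Matrix m n ℝ) : 0 ≤ frobInner A A := by
  rw [frobInner_eq_sum]
  exact Finset.sum_nonneg fun i _ => Finset.sum_nonneg fun j _ => mul_self_nonneg _

lemma frobInner_add_right (A B C : Matrix m n ℝ) :
    frobInner A (B + C) = frobInner A B + frobInner A C := by
  simp only [frobInner, Matrix.mul_add, trace_add]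

lemma frobInner_smul_right (c : ℝ) (A B : Matrix m n ℝ) :
    frobInner A (c • B) = c * frobInner A B := by
  simp only [frobInner, Matrix.mul_smul, trace_smul, smul_eq_mul]

lemma frobInner_smul_left (c : ℝ) (A B : Matrix m n ℝ) :
    frobInner (c • A) B = c * frobInner A B := by
  rw [frobInner_comm, frobInner_smul_right, frobInner_comm]

lemma frobInner_add_self (A B : Matrix m n ℝ) :
    frobInner (A + B) (A + B) = frobInner A A + 2 * frobInner A B + frobInner B B := by
  simp only [frobInner_eq_sum, Matrix.add_apply, ← Finset.sum_add_distrib, Finset.mul_sum]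
  exact Finset.sum_congr rfl fun i _ => Finset.sum_congr rfl fun j _ => by ring

lemma frobInner_vecMulVec_left (p : m → ℝ) (v : n → ℝ) (B : Matrix m n ℝ) :
    frobInner (vecMulVec p v) B = p ⬝ᵥ (B *ᵥ v) := by
  simp only [frobInner_eq_sum, vecMulVec_apply, dotProduct, mulVec, Finset.mul_sum]
  exact Finset.sum_congr rfl fun i _ => Finset.sum_congr rfl fun j _ => by ring

lemma frobInner_vecMulVec_self (p : m → ℝ) (v : n → ℝ) :
    frobInner (vecMulVec p v) (vecMulVec p v) = (p ⬝ᵥ p) * (v ⬝ᵥ v) := by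
  simp only [frobInner_eq_sum, vecMulVec_apply, dotProduct, Finset.sum_mul_sum]
  exact Finset.sum_congr rfl fun i _ => Finset.sum_congr rfl fun j _ => by ring

lemma frobInner_eq_sum_dotProduct (A : Matrix m n ℝ) : frobInner A A = ∑ i, A i ⬝ᵥ A i := by
  simp [frobInner_eq_sum, dotProduct]

lemma dotProduct_self_nonneg (v : n → ℝ) : 0 ≤ v ⬝ᵥ v :=
  Finset.sum_nonneg fun i _ => mul_self_nonneg (v i)

lemma dotProduct_mul_self_sq_le (u w : n → ℝ) : (u ⬝ᵥ w) ^ 2 ≤ (u ⬝ᵥ u) * (w ⬝ᵥ w) := by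
  simpa only [dotProduct, sq] using Finset.sum_mul_sq_le_sq_mul_sq Finset.univ u w

lemma dotProduct_vecMul_self_le (v : m → ℝ) (A : Matrix m n ℝ) :
    (v ᵥ* A) ⬝ᵥ (v ᵥ* A) ≤ frobInner A A * (v ⬝ᵥ v) := by
  have hcol : ∀ j, (v ᵥ* A) j ^ 2 ≤ (v ⬝ᵥ v) * ∑ i, A i j ^ 2 := fun j => by
    simpa only [vecMul, dotProduct, sq] using Finset.sum_mul_sq_le_sq_mul_sq Finset.univ v (A · j)
  calc (v ᵥ* A) ⬝ᵥ (v ᵥ* A) = ∑ j, (v ᵥ* A) j ^ 2 := by simp only [dotProduct, sq]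
    _ ≤ ∑ j, (v ⬝ᵥ v) * ∑ i, A i j ^ 2 := Finset.sum_le_sum fun j _ => hcol j
    _ = frobInner A A * (v ⬝ᵥ v) := by
      rw [← Finset.mul_sum, Finset.sum_comm, frobInner_eq_sum, mul_comm]
      simp only [sq]

lemma dotProduct_mulVec_self_le (A : Matrix m n ℝ) (v : n → ℝ) :
    (A *ᵥ v) ⬝ᵥ (A *ᵥ v) ≤ frobInner A A * (v ⬝ᵥ v) := by
  simpa only [vecMul_transpose, frobInner_transpose] using dotProduct_vecMul_self_le v Aᵀ

lemma frobInner_mul_self_le (A : Matrix l m ℝ) (B : Matrix m n ℝ) :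
    frobInner (A * B) (A * B) ≤ frobInner A A * frobInner B B := by
  rw [frobInner_eq_sum_dotProduct (A * B), frobInner_eq_sum_dotProduct A, Finset.sum_mul]
  refine Finset.sum_le_sum fun i _ => ?_
  rw [mul_apply_eq_vecMul, mul_comm]
  exact dotProduct_vecMul_self_le (A i) B

lemma frobInner_mul_eq_zero_of_transpose_eq_neg (A : Matrix m n ℝ) {S : Matrix n n ℝ}
    (hS : Sᵀ = -S) : frobInner A (A * S) = 0 := by
  have hsymm : (Aᵀ * A)ᵀ = Aᵀ * A := by rw [transpose_mul, transpose_transpose]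
  have h : trace (Aᵀ * A * S) = -trace (Aᵀ * A * S) := by
    conv_lhs => rw [← trace_transpose, transpose_mul, hS, hsymm, neg_mul, trace_neg,
      trace_mul_comm]
  rw [frobInner, ← Matrix.mul_assoc]
  linarith

lemma dotProduct_mulVec_self_eq_zero_of_transpose_eq_neg {S : Matrix n n ℝ} (hS : Sᵀ = -S)
    (v : n → ℝ) : v ⬝ᵥ (S *ᵥ v) = 0 := by
  have h : v ⬝ᵥ (S *ᵥ v) = -(v ⬝ᵥ (S *ᵥ v)) := by
    conv_lhs => rw [dotProduct_mulVec, ← mulVec_transpose, hS, neg_mulVec, neg_dotProduct,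
      dotProduct_comm]
  linarith

end Frobenius

lemma frobNorm_sq {n : ℕ} (A : Matrix (Fin n) (Fin n) ℝ) : frobNorm A ^ 2 = frobInner A A := by
  rw [frobNorm, Real.sq_sqrt (by positivity), frobInner_eq_sum]
  simp only [sq]

lemma euclNorm_sq {n : ℕ} (x : Fin n → ℝ) : euclNorm x ^ 2 = x ⬝ᵥ x := by
  rw [euclNorm, Real.sq_sqrt (by positivity)]
  simp only [dotProduct, sq]

section Sigma

variable {n : ℕ}

lemma sigmaMat_transpose {Λ : Matrix (Fin n) (Fin n) ℝ} (hΛ : Λ.IsSymm)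
    (Q : Matrix (Fin n) (Fin n) ℝ) : (sigmaMat Λ Q)ᵀ = -sigmaMat Λ Q := by
  have hC : (Qᵀ * Λ * Q).IsSymm := by
    simp only [IsSymm, transpose_mul, transpose_transpose, hΛ.eq, Matrix.mul_assoc]
  ext j k
  simp only [transpose_apply, Matrix.neg_apply, sigmaMat, of_apply, hC.apply j k, Fin.val_fin_lt]
  rcases lt_trichotomy j k with h | rfl | h
  · simp [h, h.not_gt]
  · simp
  · simp [h, h.not_gt]

lemma frobInner_sigmaMat_self_le (Λ Q : Matrix (Fin n) (Fin n) ℝ) :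
    frobInner (sigmaMat Λ Q) (sigmaMat Λ Q) ≤ frobInner (Qᵀ * Λ * Q) (Qᵀ * Λ * Q) := by
  simp only [frobInner_eq_sum]
  refine Finset.sum_le_sum fun j _ => Finset.sum_le_sum fun k _ => ?_
  simp only [sigmaMat, of_apply]
  split_ifs <;> simp [mul_self_nonneg]

end Sigma

section Oja

variable {n : ℕ} (x : Fin n → ℝ) (W : Matrix (Fin n) (Fin n) ℝ)

lemma outer_eq_vecMulVec : outer x = vecMulVec x x := rfl

lemma isSymm_outer : (outer x).IsSymm :=
  IsSymm.ext fun i j => mul_comm (x j) (x i)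

lemma transpose_mul_outer_mul : Wᵀ * outer x * W = vecMulVec (x ᵥ* W) (x ᵥ* W) := by
  rw [outer_eq_vecMulVec, mul_vecMulVec, vecMulVec_mul, mulVec_transpose]

lemma Gmat_outer : Gmat (outer x) W =
    vecMulVec (x - W *ᵥ (x ᵥ* W)) (x ᵥ* W) + W * sigmaMat (outer x) W := by
  have hΛW : outer x * W = vecMulVec x (x ᵥ* W) := vecMulVec_mul _ _ _
  have hWWΛW : W * Wᵀ * outer x * W = vecMulVec (W *ᵥ (x ᵥ* W)) (x ᵥ* W) := by
    rw [show W * Wᵀ * outer x * W = W * (Wᵀ * outer x * W) by simp only [Matrix.mul_assoc],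
      transpose_mul_outer_mul, mul_vecMulVec]
  rw [Gmat, hΛW, hWWΛW, sub_vecMulVec]

lemma frobInner_Gmat_outer : frobInner W (Gmat (outer x) W) =
    (x ᵥ* W) ⬝ᵥ (x ᵥ* W) - (W *ᵥ (x ᵥ* W)) ⬝ᵥ (W *ᵥ (x ᵥ* W)) := by
  rw [Gmat_outer, frobInner_add_right,
    frobInner_mul_eq_zero_of_transpose_eq_neg W (sigmaMat_transpose (isSymm_outer x) W),
    frobInner_comm, frobInner_vecMulVec_left, sub_dotProduct, dotProduct_mulVec, add_zero]

lemma frobInner_sigmaMat_outer_self_le :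
    frobInner (sigmaMat (outer x) W) (sigmaMat (outer x) W) ≤ ((x ᵥ* W) ⬝ᵥ (x ᵥ* W)) ^ 2 := by
  simpa only [transpose_mul_outer_mul, frobInner_vecMulVec_self, sq]
    using frobInner_sigmaMat_self_le (outer x) W

lemma frobInner_Gmat_outer_cross_le :
    frobInner (vecMulVec (x - W *ᵥ (x ᵥ* W)) (x ᵥ* W)) (W * sigmaMat (outer x) W) ≤
      frobInner W W * ((x ᵥ* W) ⬝ᵥ (x ᵥ* W)) ^ 2 := by
  set v := x ᵥ* W
  set S := sigmaMat (outer x) W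
  set s := frobInner W W
  set a := v ⬝ᵥ v
  set w := (W *ᵥ v) ᵥ* W
  have hs : 0 ≤ s := frobInner_self_nonneg W
  have ha : 0 ≤ a := dotProduct_self_nonneg v
  -- `Wᵀ (x - W v) = v - w` and `v ⬝ S v = 0` leave only the term `-(w ⬝ S v)`.
  have hcross : frobInner (vecMulVec (x - W *ᵥ v) v) (W * S) = -(w ⬝ᵥ (S *ᵥ v)) := by
    rw [frobInner_vecMulVec_left, ← mulVec_mulVec, dotProduct_mulVec, sub_vecMul,
      sub_dotProduct, dotProduct_mulVec_self_eq_zero_of_transpose_eq_neg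
        (sigmaMat_transpose (isSymm_outer x) W), zero_sub]
  have hw : w ⬝ᵥ w ≤ s * (s * a) :=
    (dotProduct_vecMul_self_le _ W).trans
      (mul_le_mul_of_nonneg_left (dotProduct_mulVec_self_le W v) hs)
  have hSv : (S *ᵥ v) ⬝ᵥ (S *ᵥ v) ≤ a ^ 2 * a :=
    (dotProduct_mulVec_self_le S v).trans (mul_le_mul_of_nonneg_right
      (frobInner_sigmaMat_outer_self_le x W) ha)
  have hsq : (w ⬝ᵥ (S *ᵥ v)) ^ 2 ≤ (s * a ^ 2) ^ 2 :=
    calc (w ⬝ᵥ (S *ᵥ v)) ^ 2 ≤ (w ⬝ᵥ w) * ((S *ᵥ v) ⬝ᵥ (S *ᵥ v)) :=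
          dotProduct_mul_self_sq_le _ _
      _ ≤ (s * (s * a)) * (a ^ 2 * a) :=
          mul_le_mul hw hSv (dotProduct_self_nonneg _) (by positivity)
      _ = (s * a ^ 2) ^ 2 := by ring
  rw [hcross]
  exact neg_le.mp (abs_le_of_sq_le_sq' hsq (mul_nonneg hs (sq_nonneg a))).1

lemma frobInner_Gmat_outer_self_le :
    frobInner (Gmat (outer x) W) (Gmat (outer x) W) ≤
      (x ⬝ᵥ x) ^ 2 * frobInner W W * (1 + 4 * frobInner W W ^ 2) := by
  have hcross := frobInner_Gmat_outer_cross_le x W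
  have hWS := (frobInner_mul_self_le W _).trans (mul_le_mul_of_nonneg_left
    (frobInner_sigmaMat_outer_self_le x W) (frobInner_self_nonneg W))
  have hxu : x ⬝ᵥ (W *ᵥ (x ᵥ* W)) = (x ᵥ* W) ⬝ᵥ (x ᵥ* W) := dotProduct_mulVec x W _
  have ha := dotProduct_vecMul_self_le x W
  have hb := dotProduct_mulVec_self_le W (x ᵥ* W)
  rw [Gmat_outer, frobInner_add_self, frobInner_vecMulVec_self, sub_dotProduct, dotProduct_sub,
    dotProduct_sub, hxu, dotProduct_comm (W *ᵥ _) x, hxu]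
  set m := x ⬝ᵥ x
  set s := frobInner W W
  set a := (x ᵥ* W) ⬝ᵥ (x ᵥ* W)
  set b := (W *ᵥ (x ᵥ* W)) ⬝ᵥ (W *ᵥ (x ᵥ* W))
  have hs : 0 ≤ s := frobInner_self_nonneg W
  have ha0 : 0 ≤ a := dotProduct_self_nonneg _
  have hm : 0 ≤ m := dotProduct_self_nonneg _
  have hma : m * a ≤ m * (m * s) := mul_le_mul_of_nonneg_left (by linarith) hm
  have hsa : s * a ^ 2 ≤ s * (m * s) ^ 2 :=
    mul_le_mul_of_nonneg_left (pow_le_pow_left₀ ha0 (by linarith) 2) hs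
  linarith [mul_le_mul_of_nonneg_right hb ha0, sq_nonneg a]

lemma frobInner_add_smul_Gmat_outer_self_le {η μ D : ℝ} (hη : 0 ≤ η) (hx : x ⬝ᵥ x ≤ μ)
    (hW : frobInner W W ≤ D) (hsmall : η * μ ^ 2 * (1 + 4 * D ^ 2) ≤ 1) :
    frobInner (W + η • Gmat (outer x) W) (W + η • Gmat (outer x) W) ≤
      frobInner W W * (1 + η * (2 * μ + 1)) := by
  set s := frobInner W W
  have hs : 0 ≤ s := frobInner_self_nonneg W
  have hm : 0 ≤ x ⬝ᵥ x := dotProduct_self_nonneg x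
  have hdrift : frobInner W (Gmat (outer x) W) ≤ μ * s := by
    rw [frobInner_Gmat_outer]
    linarith [dotProduct_vecMul_self_le x W, dotProduct_self_nonneg (W *ᵥ (x ᵥ* W)),
      mul_le_mul_of_nonneg_left hx hs]
  have hnoise : η ^ 2 * frobInner (Gmat (outer x) W) (Gmat (outer x) W) ≤ η * s :=
    calc η ^ 2 * frobInner (Gmat (outer x) W) (Gmat (outer x) W)
        ≤ η ^ 2 * ((x ⬝ᵥ x) ^ 2 * s * (1 + 4 * s ^ 2)) :=
          mul_le_mul_of_nonneg_left (frobInner_Gmat_outer_self_le x W) (sq_nonneg η)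
      _ = η * s * (η * (x ⬝ᵥ x) ^ 2 * (1 + 4 * s ^ 2)) := by ring
      _ ≤ η * s := by
          refine mul_le_of_le_one_right (mul_nonneg hη hs) (le_trans ?_ hsmall)
          gcongr
  rw [frobInner_add_self, frobInner_smul_right, frobInner_smul_left, frobInner_smul_right]
  linarith [mul_le_mul_of_nonneg_left hdrift hη]

end Oja

lemma one_add_pow_le_exp_mul {t : ℝ} (ht : 0 ≤ 1 + t) (k : ℕ) :
    (1 + t) ^ k ≤ Real.exp (k * t) := by
  rw [Real.exp_nat_mul]
  exact pow_le_pow_left₀ ht (by linarith [Real.add_one_le_exp t]) k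

lemma one_add_mul_pow_le_exp_of_le_div {η c T : ℝ} (hη : 0 < η) (hc : 0 ≤ c) {k : ℕ}
    (hk : (k : ℝ) ≤ T / η) : (1 + η * c) ^ k ≤ Real.exp (T * c) := by
  have hkη : k * (η * c) ≤ T * c := by
    rw [← mul_assoc]
    exact mul_le_mul_of_nonneg_right ((le_div_iff₀ hη).mp hk) hc
  exact (one_add_pow_le_exp_mul (by positivity) k).trans (Real.exp_le_exp.mpr hkη)

lemma le_mul_pow_of_step_le {s : ℕ → ℝ} {q B N : ℝ} (hq : 0 ≤ q)
    (hB : ∀ k : ℕ, (k : ℝ) ≤ N → s 0 * q ^ k ≤ B)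
    (hstep : ∀ k, s k ≤ B → s (k + 1) ≤ s k * q) :
    ∀ k : ℕ, (k : ℝ) ≤ N → s k ≤ s 0 * q ^ k
  | 0, _ => by simp
  | k + 1, hk => by
    have hk' : (k : ℝ) ≤ N := by push_cast at hk; linarith
    have ih := le_mul_pow_of_step_le hq hB hstep k hk'
    calc s (k + 1) ≤ s k * q := hstep k (ih.trans (hB k hk'))
      _ ≤ s 0 * q ^ k * q := mul_le_mul_of_nonneg_right ih hq
      _ = s 0 * q ^ (k + 1) := by ring

/-- The step-size threshold `η(r, M, T)`. -/
noncomputable def ojaStepBound (n : ℕ) (r M T : ℝ) : ℝ :=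
  1 / (M ^ 4 * (1 + ((n : ℝ) + 3) * r ^ 4 * Real.exp (2 * T * (2 * M ^ 2 + 1))))

lemma mul_sq_mul_le_one_of_le_ojaStepBound {n : ℕ} (hn : 1 ≤ n) {r M T η : ℝ} (hM : 0 < M)
    (hη0 : 0 ≤ η) (hη : η ≤ ojaStepBound n r M T) :
    η * (M ^ 2) ^ 2 * (1 + 4 * (r ^ 2 * Real.exp (T * (2 * M ^ 2 + 1))) ^ 2) ≤ 1 := by
  have hn4 : (4 : ℝ) ≤ n + 3 := by
    have : (1 : ℝ) ≤ n := by exact_mod_cast hn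
    linarith
  have hsq : (r ^ 2 * Real.exp (T * (2 * M ^ 2 + 1))) ^ 2 =
      r ^ 4 * Real.exp (2 * T * (2 * M ^ 2 + 1)) := by
    rw [mul_pow, ← Real.exp_nat_mul, ← pow_mul]
    push_cast
    ring_nf
  calc η * (M ^ 2) ^ 2 * (1 + 4 * (r ^ 2 * Real.exp (T * (2 * M ^ 2 + 1))) ^ 2)
      ≤ η * (M ^ 4 * (1 + ((n : ℝ) + 3) * r ^ 4 * Real.exp (2 * T * (2 * M ^ 2 + 1)))) := by
        rw [hsq, ← pow_mul, mul_assoc, mul_assoc _ (r ^ 4)]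
        gcongr
    _ ≤ 1 := by rwa [ojaStepBound, le_div_iff₀ (by positivity)] at hη

theorem sga_stability_general {n : ℕ} (hn : 1 ≤ n) (r T M : ℝ)
    (hM : 0 < M) (η : ℝ) (hη0 : 0 < η)
    (hη : η ≤ 1 / (M ^ 4 * (1 + ((n : ℝ) + 3) * r ^ 4 * Real.exp (2 * T * (2 * M ^ 2 + 1)))))
    (W₀ : Matrix (Fin n) (Fin n) ℝ) (hW₀ : frobNorm W₀ ≤ r)
    (x : ℕ → Fin n → ℝ) (hx : ∀ k, euclNorm (x k) ≤ M)
    (W : ℕ → Matrix (Fin n) (Fin n) ℝ) (hW0 : W 0 = W₀)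
    (hWrec : ∀ k : ℕ, W (k + 1) = W k + η • Gmat (outer (x (k + 1))) (W k)) :
    ∀ k : ℕ, (k : ℝ) ≤ T / η →
      frobNorm (W k) ^ 2 ≤ r ^ 2 * Real.exp (T * (2 * M ^ 2 + 1)) := by
  set c := 2 * M ^ 2 + 1
  set B := r ^ 2 * Real.exp (T * c)
  have hq : 0 ≤ 1 + η * c := by positivity
  have hinit : frobInner (W 0) (W 0) ≤ r ^ 2 := by
    rw [← frobNorm_sq, hW0]
    exact pow_le_pow_left₀ (Real.sqrt_nonneg _) hW₀ 2
  have hxM : ∀ k, x k ⬝ᵥ x k ≤ M ^ 2 := fun k => by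
    rw [← euclNorm_sq]
    exact pow_le_pow_left₀ (Real.sqrt_nonneg _) (hx k) 2
  have hgrowth : ∀ k : ℕ, (k : ℝ) ≤ T / η → r ^ 2 * (1 + η * c) ^ k ≤ B := fun k hk =>
    mul_le_mul_of_nonneg_left (one_add_mul_pow_le_exp_of_le_div hη0 (by positivity) hk)
      (sq_nonneg r)
  have hstep : ∀ k, frobInner (W k) (W k) ≤ B →
      frobInner (W (k + 1)) (W (k + 1)) ≤ frobInner (W k) (W k) * (1 + η * c) := fun k hk => by
    rw [hWrec k]
    exact frobInner_add_smul_Gmat_outer_self_le _ _ hη0.le (hxM _) hk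
      (mul_sq_mul_le_one_of_le_ojaStepBound hn hM hη0.le hη)
  intro k hk
  rw [frobNorm_sq]
  calc frobInner (W k) (W k) ≤ frobInner (W 0) (W 0) * (1 + η * c) ^ k :=
        le_mul_pow_of_step_le hq (fun j hj => (mul_le_mul_of_nonneg_right hinit
          (pow_nonneg hq j)).trans (hgrowth j hj)) hstep k hk
    _ ≤ r ^ 2 * (1 + η * c) ^ k := mul_le_mul_of_nonneg_right hinit (pow_nonneg hq k)
    _ ≤ B := hgrowth k hk

/-- Stability of Oja's SGA iteration: for learning rate `η ≤ η(r,M,T)`, the iterates remain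
bounded in Frobenius norm, `‖W(k)‖_F² ≤ r² e^{T(2M²+1)}`, for all `0 ≤ k ≤ T/η`. -/
theorem sga_stability {n : ℕ} (hn : 1 ≤ n) (r T M : ℝ) (hr : 0 < r) (hT : 0 < T)
    (hM : 0 < M) (η : ℝ) (hη0 : 0 < η)
    (hη : η ≤ 1 / (M ^ 4 * (1 + ((n : ℝ) + 3) * r ^ 4 * Real.exp (2 * T * (2 * M ^ 2 + 1)))))
    (W₀ : Matrix (Fin n) (Fin n) ℝ) (hW₀ : frobNorm W₀ ≤ r)
    (x : ℕ → Fin n → ℝ) (hx : ∀ k, euclNorm (x k) ≤ M)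
    (W : ℕ → Matrix (Fin n) (Fin n) ℝ) (hW0 : W 0 = W₀)
    (hWrec : ∀ k : ℕ, W (k + 1) = W k + η • Gmat (outer (x (k + 1))) (W k)) :
    ∀ k : ℕ, (k : ℝ) ≤ T / η →
      frobNorm (W k) ^ 2 ≤ r ^ 2 * Real.exp (T * (2 * M ^ 2 + 1)) :=
  sga_stability_general hn r T M hM η hη0 hη W₀ hW₀ x hx W hW0 hWrec
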